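/- Let G be a unit interval graph on [n] determined by intervals [a_1,1],[a_2,2],…,[a_n,n] (with edge ij, i<j, whenever i,j ∈ [a_k,k] for some k), and let G' be G with vertex n removed. Then Y_G = Y_{G'}↑_n^n − Σ_{i=a_n}^{n-1} Y_{G'}↑_i^n. -/
import Mathlib


open scoped Classical

/-- Formal power series in the non-commuting variables `x 0, x 1, x 2, …` over `ℚ`,
represented by their coefficient function on words. -/
abbrev NCS : Type := List ℕ → ℚ

/-- Product of two series in non-commuting variables (Cauchy product on words). -/
noncomputable def ncMul (f g : NCS) : NCS := fun w =>
  ∑ i ∈ Finset.range (w.length + 1), f (w.take i) * g (w.drop i)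

/-- `p₁ = x_1 + x_2 + ⋯`, the chromatic symmetric function of a single vertex. -/
noncomputable def p1 : NCS := fun w => if w.length = 1 then 1 else 0

/-- The chromatic symmetric function in non-commuting variables of a graph on `Fin n`. -/
noncomputable def Y {n : ℕ} (G : SimpleGraph (Fin n)) : NCS := fun w =>
  if h : w.length = n then
    (if ∀ u v : Fin n, G.Adj u v →
        w.get (Fin.cast h.symm u) ≠ w.get (Fin.cast h.symm v) then 1 else 0)
  else 0

/-- The induced series `f↑_j` (positions are 1-based): append a copy of the `j`-th
variable at the end of each monomial; extended linearly. -/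
noncomputable def induce (f : NCS) (j : ℕ) : NCS := fun w =>
  if 1 ≤ j ∧ j + 1 ≤ w.length ∧ w.getLast? = (w.dropLast)[j - 1]? then f w.dropLast else 0

/-- The unit interval graph on `Fin n` with intervals `[a k, k]` (where `a k ≤ k`):
vertices `i < j` are adjacent whenever `i, j ∈ [a k, k]` for some `k`. -/
def UIG {n : ℕ} (a : Fin n → Fin n) : SimpleGraph (Fin n) :=
  SimpleGraph.fromRel (fun i j => ∃ k, a k ≤ i ∧ i ≤ k ∧ a k ≤ j ∧ j ≤ k)

/-- The graph obtained by removing the last vertex (the induced subgraph on the first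
`n` of the `n+1` vertices). -/
def removeLast {n : ℕ} (G : SimpleGraph (Fin (n + 1))) : SimpleGraph (Fin n) :=
  SimpleGraph.comap Fin.castSucc G

lemma Y_ne_len {n : ℕ} (G : SimpleGraph (Fin n)) (w : List ℕ) (h : w.length ≠ n) :
    Y G w = 0 := dif_neg h

lemma ncMul_p1 (f : NCS) (w : List ℕ) :
    ncMul f p1 w = if w = [] then 0 else f w.dropLast := by
  rcases eq_or_ne w [] with h | h
  · subst h; simp [ncMul, p1]
  · rw [if_neg h]
    have hL : 1 ≤ w.length := List.length_pos_iff.mpr h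
    unfold ncMul
    rw [Finset.sum_eq_single (w.length - 1)]
    · have h1 : (w.drop (w.length - 1)).length = 1 := by simp; omega
      rw [List.dropLast_eq_take]
      simp [p1, h1]
    · intro i hi hne
      simp only [Finset.mem_range] at hi
      have hne1 : ¬ ((w.drop i).length = 1) := by simp; omega
      simp only [p1, if_neg hne1, mul_zero]
    · intro h'
      exact absurd (Finset.mem_range.mpr (by omega)) h'

lemma uig_adj_last {n : ℕ} (a : Fin (n+1) → Fin (n+1)) (ha : ∀ k, a k ≤ k) (v : Fin (n+1)) :
    (UIG a).Adj v (Fin.last n) ↔ a (Fin.last n) ≤ v ∧ v ≠ Fin.last n := by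
  simp only [UIG, SimpleGraph.fromRel_adj]
  constructor
  · rintro ⟨hne, ⟨k, h1, h2, h3, h4⟩ | ⟨k, h1, h2, h3, h4⟩⟩
    · have : k = Fin.last n := le_antisymm (Fin.le_last k) h4
      subst this; exact ⟨h1, hne⟩
    · have : k = Fin.last n := le_antisymm (Fin.le_last k) h2
      subst this; exact ⟨h3, hne⟩
  · rintro ⟨h1, h2⟩
    exact ⟨h2, Or.inl ⟨Fin.last n, h1, Fin.le_last v, ha _, le_refl _⟩⟩

lemma uig_clique {n : ℕ} (a : Fin (n+1) → Fin (n+1)) {u v : Fin (n+1)}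
    (hu : a (Fin.last n) ≤ u) (hv : a (Fin.last n) ≤ v) (hne : u ≠ v) :
    (UIG a).Adj u v := by
  simp only [UIG, SimpleGraph.fromRel_adj]
  exact ⟨hne, Or.inl ⟨Fin.last n, hu, Fin.le_last _, hv, Fin.le_last _⟩⟩

/-- For a unit interval graph `G` on `n+1` vertices with intervals `[a k, k]`, letting
`G'` be `G` with the last vertex removed,
`Y_G = Y_{G'}↑_n^n − Σ_{i=a_n}^{n-1} Y_{G'}↑_i^n`, where `↑_n^n` is right
multiplication by `p₁` (in 1-based positions; the last vertex has 1-based label `n+1`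
and its interval starts at the 1-based label `(a (last) : ℕ) + 1`). -/
theorem uig_recursion (n : ℕ) (a : Fin (n + 1) → Fin (n + 1)) (ha : ∀ k, a k ≤ k) :
    Y (UIG a) =
      ncMul (Y (removeLast (UIG a))) p1 -
        ∑ i ∈ Finset.Icc ((a (Fin.last n) : ℕ) + 1) n,
          induce (Y (removeLast (UIG a))) i := by
  funext w
  simp only [Pi.sub_apply, Finset.sum_apply]
  set G' := removeLast (UIG a) with hG'
  set A := ((a (Fin.last n) : ℕ)) with hAdef
  have hAle : A ≤ n := by
    have := ha (Fin.last n); simpa [hAdef, Fin.le_def, Fin.last] using this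
  by_cases hw : w.length = n + 1
  · -- main case
    have hwne : w ≠ [] := by intro h; subst h; simp at hw
    have hw' : w.dropLast.length = n := by simp [hw]
    set cc : ℕ → ℕ := fun j => w.getD j 0 with hccdef
    have hgetw : ∀ (j : ℕ) (hj : j < w.length), w[j] = cc j := by
      intro j hj
      simp [hccdef, List.getD_eq_getElem?_getD, List.getElem?_eq_getElem hj]
    rw [ncMul_p1, if_neg hwne]
    set P : Prop := ∀ u v : Fin (n+1), (UIG a).Adj u v →
        w.get (Fin.cast hw.symm u) ≠ w.get (Fin.cast hw.symm v) with hP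
    set P' : Prop := ∀ u v : Fin n, G'.Adj u v →
        w.dropLast.get (Fin.cast hw'.symm u) ≠ w.dropLast.get (Fin.cast hw'.symm v) with hP'
    have hYG : Y (UIG a) w = if P then 1 else 0 := by
      unfold Y; rw [dif_pos hw]
    have hYG' : Y G' w.dropLast = if P' then 1 else 0 := by
      unfold Y; rw [dif_pos hw']
    have hget : ∀ (j : ℕ) (hj : j < w.dropLast.length), w.dropLast[j] = cc j := by
      intro j hj
      rw [List.getElem_dropLast, hgetw]
    have hvalw : ∀ v : Fin (n+1), w.get (Fin.cast hw.symm v) = cc v.val := by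
      intro v
      rw [List.get_eq_getElem, hgetw]
      · simp
    have hvald : ∀ u : Fin n, w.dropLast.get (Fin.cast hw'.symm u) = cc u.val := by
      intro u
      rw [List.get_eq_getElem, hget]
      · simp
    -- translate P and P'
    set PC : Prop := ∀ u v : Fin n, G'.Adj u v → cc u.val ≠ cc v.val with hPC
    have hP'c : P' ↔ PC := by
      rw [hP', hPC]
      constructor
      · intro h u v huv
        rw [← hvald u, ← hvald v]; exact h u v huv
      · intro h u v huv
        rw [hvald u, hvald v]; exact h u v huv
    have hPiff : P ↔ (PC ∧ ∀ j : ℕ, A ≤ j → j < n → cc j ≠ cc n) := by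
      rw [hP, hPC]
      constructor
      · intro h
        constructor
        · intro u v huv
          have := h u.castSucc v.castSucc huv
          rw [hvalw, hvalw] at this
          simpa using this
        · intro j hAj hjn
          have hadj : (UIG a).Adj ⟨j, by omega⟩ (Fin.last n) := by
            apply (uig_adj_last a ha _).mpr
            refine ⟨?_, ?_⟩
            · rw [Fin.le_def]; exact hAj
            · intro hcon
              have : j = n := by simpa [Fin.ext_iff, Fin.last] using hcon
              omega
          have := h _ _ hadj
          rw [hvalw, hvalw] at this
          simpa [Fin.last] using this
      · rintro ⟨h1, h2⟩ u v huv
        rw [hvalw, hvalw]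
        rcases eq_or_ne v (Fin.last n) with rfl | hv
        · rcases (uig_adj_last a ha u).mp huv with ⟨hau, hune⟩
          have hu' : (u : ℕ) < n := by
            have := u.isLt
            have : (u : ℕ) ≠ n := fun e => hune (Fin.ext e)
            omega
          exact h2 u.val (by rw [Fin.le_def] at hau; exact hau) hu'
        rcases eq_or_ne u (Fin.last n) with rfl | hu
        · rcases (uig_adj_last a ha v).mp huv.symm with ⟨hav, hvne⟩
          have hv' : (v : ℕ) < n := by
            have := v.isLt
            have : (v : ℕ) ≠ n := fun e => hvne (Fin.ext e)
            omega
          exact fun e => h2 v.val (by rw [Fin.le_def] at hav; exact hav) hv' e.symm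
        · have hu' : (u : ℕ) < n := by
            have := u.isLt
            have : (u : ℕ) ≠ n := fun e => hu (Fin.ext e)
            omega
          have hv' : (v : ℕ) < n := by
            have := v.isLt
            have : (v : ℕ) ≠ n := fun e => hv (Fin.ext e)
            omega
          have hadj : G'.Adj ⟨u.val, hu'⟩ ⟨v.val, hv'⟩ := by
            show (UIG a).Adj (Fin.castSucc ⟨u.val, hu'⟩) (Fin.castSucc ⟨v.val, hv'⟩)
            have e1 : Fin.castSucc ⟨u.val, hu'⟩ = u := by simp [Fin.ext_iff]
            have e2 : Fin.castSucc ⟨v.val, hv'⟩ = v := by simp [Fin.ext_iff]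
            rw [e1, e2]; exact huv
          exact h1 _ _ hadj
    -- the getLast? / getElem? facts
    have hlast? : w.getLast? = some (cc n) := by
      rw [List.getLast?_eq_getElem?, show w.length - 1 = n by omega,
        List.getElem?_eq_getElem (by omega), hgetw]
    have hdrop? : ∀ j : ℕ, j < n → w.dropLast[j]? = some (cc j) := by
      intro j hj
      rw [List.getElem?_eq_getElem (by rw [hw']; exact hj), hget]
    -- rewrite the induce terms
    have hind : ∀ i ∈ Finset.Icc (A + 1) n, induce (Y G') i w =
        if cc n = cc (i - 1) then (if P' then (1:ℚ) else 0) else 0 := by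
      intro i hi
      rw [Finset.mem_Icc] at hi
      unfold induce
      rw [hYG', hlast?, hdrop? (i-1) (by omega)]
      have h1 : 1 ≤ i := by omega
      have h2 : i + 1 ≤ w.length := by omega
      by_cases he : cc n = cc (i - 1)
      · rw [if_pos ⟨h1, h2, by rw [he]⟩, if_pos he]
      · rw [if_neg, if_neg he]
        rintro ⟨-, -, hsome⟩
        exact he (Option.some.inj hsome)
    rw [hYG, hYG', Finset.sum_congr rfl hind]
    -- final case analysis
    by_cases hp' : P'
    · have hpc : PC := hP'c.mp hp'
      rw [if_pos hp']
      by_cases hall : ∀ j : ℕ, A ≤ j → j < n → cc j ≠ cc n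
      · rw [if_pos (hPiff.mpr ⟨hpc, hall⟩)]
        rw [Finset.sum_eq_zero, sub_zero]
        intro i hi
        rw [Finset.mem_Icc] at hi
        rw [if_neg]
        intro e
        exact hall (i - 1) (by omega) (by omega) e.symm
      · push_neg at hall
        obtain ⟨j0, hAj0, hj0n, heq⟩ := hall
        rw [if_neg (fun hp => (hPiff.mp hp).2 j0 hAj0 hj0n heq)]
        rw [Finset.sum_eq_single_of_mem (j0 + 1) (Finset.mem_Icc.mpr ⟨by omega, by omega⟩)]
        · rw [Nat.add_sub_cancel, if_pos heq.symm]
          simp [hp']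
        · intro i hi hne
          rw [Finset.mem_Icc] at hi
          rw [if_neg]
          intro e
          have hne' : i - 1 ≠ j0 := by omega
          have hadj : G'.Adj ⟨i - 1, by omega⟩ ⟨j0, hj0n⟩ := by
            show (UIG a).Adj (Fin.castSucc ⟨i - 1, by omega⟩) (Fin.castSucc ⟨j0, hj0n⟩)
            apply uig_clique a
            · rw [Fin.le_def]; show A ≤ i - 1; omega
            · rw [Fin.le_def]; exact hAj0
            · simp [Fin.ext_iff]; omega
          exact hpc _ _ hadj (by simpa using e.symm.trans heq.symm)
    · rw [if_neg hp', if_neg (fun hp => hp' (hP'c.mpr (hPiff.mp hp).1))]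
      rw [Finset.sum_eq_zero, sub_zero]
      intro i hi
      split <;> simp [hp']

  · -- degenerate case
    have h0 : Y (UIG a) w = 0 := Y_ne_len _ _ hw
    rw [h0, ncMul_p1]
    have h1 : (if w = [] then (0:ℚ) else Y G' w.dropLast) = 0 := by
      split
      · rfl
      · apply Y_ne_len
        rename_i hne
        have := List.length_pos_iff.mpr hne
        simp; omega
    rw [h1]
    have h2 : ∀ i ∈ Finset.Icc (A + 1) n, induce (Y G') i w = 0 := by
      intro i hi
      unfold induce
      split
      · rename_i hcond
        apply Y_ne_len
        obtain ⟨hi1, hi2, -⟩ := hcond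
        have : 1 ≤ w.length := by omega
        simp; omega
      · rfl
    rw [Finset.sum_eq_zero h2]
    ring
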